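/- Let Ŵ be an n×n row-stochastic matrix, f̂₀ ∈ [-1,1]ⁿ, 𝒱 an interval partition of [0,1] with weights p̂ᵢ = λ(Vⁱ), and W_𝒱, f₀ the associated DiKernel and opinion function. Then for every t ≥ 0, the average opinion in the continuous model equals the p̂-weighted average in the discrete model: ∫₀¹ (Tᵗ(W_𝒱)f₀)(x)dx = ∑ᵢ p̂ᵢ (Ŵᵗ f̂₀)ᵢ. -/

import Mathlib

open MeasureTheory Set

noncomputable def Tk (W : ℝ → ℝ → ℝ) (f : ℝ → ℝ) : ℝ → ℝ :=
  fun x => ∫ y in Icc (0:ℝ) 1, W x y * f y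

noncomputable def L1norm (f : ℝ → ℝ) : ℝ :=
  ∫ x in Icc (0:ℝ) 1, |f x|

noncomputable def cutNorm (U : ℝ → ℝ → ℝ) : ℝ :=
  ⨆ p : {p : Set ℝ × Set ℝ // MeasurableSet p.1 ∧ MeasurableSet p.2},
    |∫ x in p.1.1 ∩ Icc (0:ℝ) 1, ∫ y in p.1.2 ∩ Icc (0:ℝ) 1, U x y|

structure IntervalPartition (n : ℕ) where
  a : ℕ → ℝ
  mono : ∀ i < n, a i < a (i + 1)
  first : a 0 = 0
  last : a n = 1

def IntervalPartition.cell {n : ℕ} (P : IntervalPartition n) (i : Fin n) : Set ℝ :=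
  if (i : ℕ) + 1 = n then Icc (P.a i) (P.a ((i : ℕ) + 1))
  else Ico (P.a i) (P.a ((i : ℕ) + 1))

noncomputable def discretize {n : ℕ} (W : ℝ → ℝ → ℝ) (P : IntervalPartition n) : ℝ → ℝ → ℝ :=
  fun x y => ∑ i : Fin n, ∑ j : Fin n,
    (P.cell i).indicator 1 x * (P.cell j).indicator 1 y *
      ((∫ u in P.cell i, ∫ v in P.cell j, W u v) /
        ((P.a ((i : ℕ) + 1) - P.a i) * (P.a ((j : ℕ) + 1) - P.a j)))

noncomputable def blockKernel {n : ℕ} (P : IntervalPartition n)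
    (Wm : Matrix (Fin n) (Fin n) ℝ) : ℝ → ℝ → ℝ :=
  fun x y => ∑ i : Fin n, ∑ j : Fin n,
    (P.cell i).indicator 1 x * (P.cell j).indicator 1 y *
      (Wm i j / (P.a ((j : ℕ) + 1) - P.a j))

noncomputable def blockFun {n : ℕ} (P : IntervalPartition n) (v : Fin n → ℝ) : ℝ → ℝ :=
  fun x => ∑ i : Fin n, (P.cell i).indicator 1 x * v i

/-! Both the kernel `W_𝒱` and `f₀` are constant on the cells of the partition, and
`T(W_𝒱)` maps a function taking the value `vⱼ` on `Vʲ` to the one taking the value `(Ŵ v)ᵢ` on `Vⁱ`: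
the factor `1/λ(Vʲ)` in the kernel cancels the length of the cell it is integrated over.
Hence `Tᵗ(W_𝒱) f₀` is the step function of `Ŵᵗ f̂₀`, whose integral is the `p̂`-weighted sum. -/

section IndicatorIntegral

variable {X : Type*} [MeasurableSpace X] {μ : Measure X} {s : Set X}

lemma integrable_indicator_one_mul_const [IsFiniteMeasure μ] (hs : MeasurableSet s) (c : ℝ) :
    Integrable (fun x => s.indicator 1 x * c) μ :=
  ((integrable_const (1 : ℝ)).indicator hs).mul_const c

lemma setIntegral_indicator_one_mul_const {t : Set X} (hs : MeasurableSet s) (hst : s ⊆ t)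
    (c : ℝ) : ∫ x in t, s.indicator 1 x * c ∂μ = μ.real s * c := by
  rw [integral_mul_const, integral_indicator_one hs, measureReal_restrict_apply hs,
    inter_eq_left.mpr hst]

end IndicatorIntegral

namespace IntervalPartition

variable {n : ℕ} (P : IntervalPartition n)

lemma a_le_a_of_le {i j : ℕ} (hij : i ≤ j) (hj : j ≤ n) : P.a i ≤ P.a j := by
  induction j, hij using Nat.le_induction with
  | base => exact le_rfl
  | succ j _ ih => exact (ih (by omega)).trans (P.mono j (by omega)).le

lemma measurableSet_cell (i : Fin n) : MeasurableSet (P.cell i) := by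
  unfold cell
  split
  · exact measurableSet_Icc
  · exact measurableSet_Ico

lemma cell_subset_Icc (i : Fin n) : P.cell i ⊆ Icc (P.a i) (P.a ((i : ℕ) + 1)) := by
  unfold cell
  split
  · exact subset_rfl
  · exact Ico_subset_Icc_self

lemma cell_subset_unitInterval (i : Fin n) : P.cell i ⊆ Icc 0 1 := by
  refine (P.cell_subset_Icc i).trans (Icc_subset_Icc ?_ ?_)
  · simpa [P.first] using P.a_le_a_of_le (Nat.zero_le i) i.is_lt.le
  · simpa [P.last] using P.a_le_a_of_le i.is_lt le_rfl

lemma measureReal_cell (i : Fin n) : volume.real (P.cell i) = P.a ((i : ℕ) + 1) - P.a i := by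
  have hlt := P.mono i i.is_lt
  unfold cell
  split
  · rw [Real.volume_real_Icc_of_le hlt.le]
  · rw [Real.volume_real_Ico_of_le hlt.le]

lemma pairwise_disjoint_cell : Pairwise fun i j => Disjoint (P.cell i) (P.cell j) := by
  have key : ∀ i j : Fin n, (i : ℕ) < j → Disjoint (P.cell i) (P.cell j) := by
    intro i j hij
    have hi : P.cell i ⊆ Iio (P.a ((i : ℕ) + 1)) := by
      rw [cell, if_neg (by omega)]
      exact fun x hx => hx.2
    have hj : P.cell j ⊆ Ici (P.a ((i : ℕ) + 1)) := fun x hx =>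
      (P.a_le_a_of_le hij j.is_lt.le).trans (P.cell_subset_Icc j hx).1
    exact (Iio_disjoint_Ici le_rfl).mono hi hj
  intro i j hij
  rcases lt_or_gt_of_ne (Fin.val_ne_of_ne hij) with h | h
  · exact key i j h
  · exact (key j i h).symm

end IntervalPartition

section BlockModel

variable {n : ℕ} (P : IntervalPartition n)

lemma blockFun_eq_of_mem (v : Fin n → ℝ) {j : Fin n} {x : ℝ} (hx : x ∈ P.cell j) :
    blockFun P v x = v j := by
  rw [blockFun, Finset.sum_eq_single j]
  · simp [hx]
  · intro i _ hij
    rw [indicator_of_notMem ((P.pairwise_disjoint_cell hij).notMem_of_mem_right hx), zero_mul]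
  · simp

lemma indicator_cell_mul_blockFun (v : Fin n → ℝ) (j : Fin n) (y : ℝ) :
    (P.cell j).indicator 1 y * blockFun P v y = (P.cell j).indicator 1 y * v j := by
  by_cases hy : y ∈ P.cell j
  · rw [blockFun_eq_of_mem P v hy]
  · simp [hy]

lemma setIntegral_indicator_cell_mul_const (j : Fin n) (c : ℝ) :
    ∫ y in Icc (0:ℝ) 1, (P.cell j).indicator 1 y * c = (P.a ((j : ℕ) + 1) - P.a j) * c := by
  rw [setIntegral_indicator_one_mul_const (P.measurableSet_cell j)
    (P.cell_subset_unitInterval j), P.measureReal_cell]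

lemma integral_blockFun (v : Fin n → ℝ) :
    ∫ x in Icc (0:ℝ) 1, blockFun P v x = ∑ i : Fin n, (P.a ((i : ℕ) + 1) - P.a i) * v i := by
  unfold blockFun
  rw [integral_finsetSum _
    fun i _ => integrable_indicator_one_mul_const (P.measurableSet_cell i) _]
  simp only [setIntegral_indicator_cell_mul_const]

lemma Tk_blockKernel_blockFun (Wm : Matrix (Fin n) (Fin n) ℝ) (v : Fin n → ℝ) :
    Tk (blockKernel P Wm) (blockFun P v) = blockFun P (Wm.mulVec v) := by
  funext x
  have hintegrand : ∀ y, blockKernel P Wm x y * blockFun P v y = ∑ i : Fin n, ∑ j : Fin n,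
      (P.cell j).indicator 1 y *
        ((P.cell i).indicator 1 x * (Wm i j / (P.a ((j : ℕ) + 1) - P.a j)) * v j) := by
    intro y
    simp only [blockKernel, Finset.sum_mul]
    refine Finset.sum_congr rfl fun i _ => Finset.sum_congr rfl fun j _ => ?_
    linear_combination ((P.cell i).indicator 1 x * (Wm i j / (P.a ((j : ℕ) + 1) - P.a j))) *
      indicator_cell_mul_blockFun P v j y
  have hint : ∀ j c, Integrable (fun y => (P.cell j).indicator 1 y * c)
      (volume.restrict (Icc (0:ℝ) 1)) :=
    fun j => integrable_indicator_one_mul_const (P.measurableSet_cell j)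
  simp only [Tk, hintegrand]
  rw [integral_finsetSum _ fun i _ => integrable_finsetSum _ fun j _ => hint j _]
  refine Finset.sum_congr rfl fun i _ => ?_
  rw [integral_finsetSum _ fun j _ => hint j _, Matrix.mulVec, dotProduct, Finset.mul_sum]
  refine Finset.sum_congr rfl fun j _ => ?_
  rw [setIntegral_indicator_cell_mul_const]
  have hlen : P.a ((j : ℕ) + 1) - P.a j ≠ 0 := (sub_pos.mpr (P.mono j j.is_lt)).ne'
  field_simp

lemma iterate_Tk_blockKernel_blockFun (Wm : Matrix (Fin n) (Fin n) ℝ) (v : Fin n → ℝ) (t : ℕ) :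
    (Tk (blockKernel P Wm))^[t] (blockFun P v) = blockFun P ((Wm ^ t).mulVec v) := by
  induction t with
  | zero => simp
  | succ t ih =>
    rw [Function.iterate_succ_apply', ih, Tk_blockKernel_blockFun, pow_succ',
      Matrix.mulVec_mulVec]

end BlockModel

theorem stmt_9_general {n : ℕ} (Wm : Matrix (Fin n) (Fin n) ℝ) (f₀ : Fin n → ℝ)
    (P : IntervalPartition n) :
    ∀ t : ℕ,
      (∫ x in Icc (0:ℝ) 1, (Tk (blockKernel P Wm))^[t] (blockFun P f₀) x) =
        ∑ i : Fin n, (P.a ((i : ℕ) + 1) - P.a i) * ((Wm ^ t).mulVec f₀) i := by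
  intro t
  rw [iterate_Tk_blockKernel_blockFun, integral_blockFun]

theorem stmt_9 {n : ℕ} (Wm : Matrix (Fin n) (Fin n) ℝ) (f₀ : Fin n → ℝ)
    (P : IntervalPartition n)
    (hWnn : ∀ i j, 0 ≤ Wm i j) (hWrow : ∀ i, ∑ j, Wm i j = 1)
    (hf : ∀ i, f₀ i ∈ Icc (-1:ℝ) 1) :
    ∀ t : ℕ,
      (∫ x in Icc (0:ℝ) 1, (Tk (blockKernel P Wm))^[t] (blockFun P f₀) x) =
        ∑ i : Fin n, (P.a ((i : ℕ) + 1) - P.a i) * ((Wm ^ t).mulVec f₀) i :=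
  stmt_9_general Wm f₀ P
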